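/- A triple (a,b,c) of nonnegative integers satisfies p1(a,b,c) = p2(a,b,c) = p3(a,b,c) = 0, for the three polynomials p1, p2, p3 defined in the context, if and only if b = 0 and c = 0 (i.e. (a,b,c) = (k,0,0) for some nonnegative integer k). -/
import Mathlib


/- The Harish–Chandra projections (as functions on ℂ³) of a basis of the zero-weight
component of the `U(B₃)`-submodule generated, under the left-adjoint action, by the image
in the Zhu algebra of the conformal-weight-2 singular vector of `V^{-2}(B₃)`. -/

noncomputable def pB1 (h1 h2 h3 : ℂ) : ℂ := (2*h2 + h3)*(h1 + h2 + h3) + 2*(h2 + h3)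

noncomputable def pB2 (h1 h2 h3 : ℂ) : ℂ := (h2 + h3)*(2*h1 + 2*h2 + h3 + 2)

noncomputable def pB3 (h1 h2 h3 : ℂ) : ℂ := h3*(h1 + 2*h2 + h3 + 2)

/-- A triple `(a, b, c)` of nonnegative integers is a common zero of `pB1, pB2, pB3` if
and only if `b = 0` and `c = 0`, i.e. `(a, b, c) = (k, 0, 0)` for some `k ∈ ℤ≥0`
(these dominant integral weights correspond to the irreducible ordinary modules
`L_{B₃}(-2, k·ϖ₁)` of `V^{-2}(B₃)/I^{B₃}`). -/
theorem nonneg_integral_zeros_B3_singular (a b c : ℕ) :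
    (pB1 a b c = 0 ∧ pB2 a b c = 0 ∧ pB3 a b c = 0) ↔ (b = 0 ∧ c = 0) := by
  constructor
  · rintro ⟨-, h2, -⟩
    unfold pB2 at h2
    rcases mul_eq_zero.mp h2 with h | h
    · have : ((b + c : ℕ) : ℂ) = 0 := by push_cast; linear_combination h
      have hbc : b + c = 0 := by exact_mod_cast this
      omega
    · exfalso
      have : ((2*a + 2*b + c + 2 : ℕ) : ℂ) = 0 := by push_cast; linear_combination h
      have : 2*a + 2*b + c + 2 = 0 := by exact_mod_cast this
      omega
  · rintro ⟨rfl, rfl⟩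
    unfold pB1 pB2 pB3
    push_cast
    ring_nf
    simp
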